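/- (Proposition 1, 2d reciprocity.) Let A, B, C ∈ ℝ² be pairwise distinct and ωA, ωB, ωC ∈ ℝ. Then (d/dt at t = 0 of I₂(ωB, ωC, C − (B + t·K₂(A, ωA, B)))) + (d/dt at t = 0 of I₂(ωA, ωB, (B + t·K₂(C, ωC, B)) − A)) = 0. That is, A's action on B affects the interaction energy between B and C in an exactly equal and opposite way as C's action on B affects the interaction energy between A and B. -/

import Mathlib

open MeasureTheory Real

noncomputable section

/-- The scalar cross product on `EuclideanSpace ℝ (Fin 2)`: `cross2 u v = u₁v₂ − u₂v₁`. -/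
def cross2 (u v : EuclideanSpace ℝ (Fin 2)) : ℝ := u 0 * v 1 - u 1 * v 0

/-- The rotation by 90 degrees: `v^⊥ = (−v₂, v₁)`. -/
def perp (v : EuclideanSpace ℝ (Fin 2)) : EuclideanSpace ℝ (Fin 2) :=
  (WithLp.equiv 2 (Fin 2 → ℝ)).symm ![-(v 1), v 0]

/-- The 2d Biot-Savart velocity induced at `x` by a point vortex at `p` with scalar
vorticity `w`: `K₂(p, w, x) = (w/(2π))·(x − p)^⊥/‖x − p‖²`. -/
def K2 (p : EuclideanSpace ℝ (Fin 2)) (w : ℝ) (x : EuclideanSpace ℝ (Fin 2)) :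
    EuclideanSpace ℝ (Fin 2) :=
  (w / (2 * π)) • ((‖x - p‖ ^ 2)⁻¹ • perp (x - p))

/-- The 2d interaction energy of scalar vorticities `wb, wc` at displacement `d`:
`I₂(wb, wc, d) = (1/(4π))·wb·wc·log ‖d‖`. -/
def I2 (wb wc : ℝ) (d : EuclideanSpace ℝ (Fin 2)) : ℝ :=
  (1 / (4 * π)) * wb * wc * Real.log ‖d‖


/-! The derivative at `t = 0` of `log ‖d + t • v‖` is `⟪d, v⟫ / ‖d‖²`. Since a Biot-Savart
velocity is a rotated vector, its inner product with a displacement is a cross product, so both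
derivatives equal `± ωA ωB ωC / (8π²) · cross2 (B - A) (C - B) / (‖B - A‖² ‖C - B‖²)`, with
opposite signs by antisymmetry of `cross2`. -/

open scoped RealInnerProductSpace

theorem HasDerivAt.log_norm {F : Type*} [NormedAddCommGroup F] [InnerProductSpace ℝ F]
    {f : ℝ → F} {f' : F} {x : ℝ} (hf : HasDerivAt f f' x) (hx : f x ≠ 0) :
    HasDerivAt (fun t => Real.log ‖f t‖) (⟪f x, f'⟫ / ‖f x‖ ^ 2) x := by
  have hsq : HasDerivAt (fun t => Real.log (‖f t‖ ^ 2)) (2 * ⟪f x, f'⟫ / ‖f x‖ ^ 2) x :=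
    hf.norm_sq.log (by positivity)
  have hlog : (fun t => Real.log ‖f t‖) = fun t => Real.log (‖f t‖ ^ 2) / 2 := by
    ext t
    rw [Real.log_pow]
    ring
  rw [hlog]
  exact (hsq.div_const 2).congr_deriv (by ring)

theorem hasDerivAt_add_smul {F : Type*} [NormedAddCommGroup F] [NormedSpace ℝ F]
    (a v : F) (x : ℝ) : HasDerivAt (fun t : ℝ => a + t • v) v x := by
  simpa using ((hasDerivAt_id x).smul_const v).const_add a

theorem cross2_anticomm (u v : EuclideanSpace ℝ (Fin 2)) : -cross2 u v = cross2 v u := by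
  simp only [cross2]
  ring

theorem cross2_neg_left (u v : EuclideanSpace ℝ (Fin 2)) : cross2 (-u) v = -cross2 u v := by
  simp only [cross2, PiLp.neg_apply]
  ring

theorem inner_perp_right (u v : EuclideanSpace ℝ (Fin 2)) : ⟪u, perp v⟫ = cross2 v u := by
  simp only [perp, cross2, WithLp.equiv_symm_apply, PiLp.inner_apply, RCLike.inner_apply,
    ringHom_apply, Fin.sum_univ_two, Matrix.cons_val_zero, Matrix.cons_val_one,
    Matrix.cons_val_fin_one]
  ring

theorem inner_K2_right (u p x : EuclideanSpace ℝ (Fin 2)) (w : ℝ) :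
    ⟪u, K2 p w x⟫ = w / (2 * π) * cross2 (x - p) u / ‖x - p‖ ^ 2 := by
  rw [K2, real_inner_smul_right, real_inner_smul_right, inner_perp_right]
  ring

theorem two_d_reciprocity_general (A B C : EuclideanSpace ℝ (Fin 2)) (ωA ωB ωC : ℝ)
    (hAB : A ≠ B) (hBC : B ≠ C) :
    deriv (fun t : ℝ => I2 ωB ωC (C - (B + t • K2 A ωA B))) 0 +
      deriv (fun t : ℝ => I2 ωA ωB ((B + t • K2 C ωC B) - A)) 0 = 0 := by
  have hCB := (HasDerivAt.log_norm ((hasDerivAt_add_smul B (K2 A ωA B) 0).const_sub C)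
    (by simpa [sub_eq_zero] using hBC.symm)).const_mul (1 / (4 * π) * ωB * ωC)
  have hBA := (HasDerivAt.log_norm ((hasDerivAt_add_smul B (K2 C ωC B) 0).sub_const A)
    (by simpa [sub_eq_zero] using hAB.symm)).const_mul (1 / (4 * π) * ωA * ωB)
  simp only [I2]
  rw [hCB.deriv, hBA.deriv]
  simp only [zero_smul, add_zero, inner_neg_right, inner_K2_right]
  rw [norm_sub_rev B C, ← neg_sub C B, cross2_neg_left, ← cross2_anticomm (C - B)]
  ring

/-- Proposition 1 (2d reciprocity): `A`'s action on `B` affects the interaction energy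
between `B` and `C` in an exactly equal and opposite way as `C`'s action on `B`
affects the interaction energy between `A` and `B`. -/
theorem two_d_reciprocity (A B C : EuclideanSpace ℝ (Fin 2)) (ωA ωB ωC : ℝ)
    (hAB : A ≠ B) (hBC : B ≠ C) (hAC : A ≠ C) :
    deriv (fun t : ℝ => I2 ωB ωC (C - (B + t • K2 A ωA B))) 0 +
      deriv (fun t : ℝ => I2 ωA ωB ((B + t • K2 C ωC B) - A)) 0 = 0 :=
  two_d_reciprocity_general A B C ωA ωB ωC hAB hBC
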